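/- For integers 1 ≤ k ≤ n and 0 ≤ p ≤ n, the generating function identity Σ_{k=1}^{n} C(n,p;k) (z/(1-z))^k = n·z · ₂F₁(p+1, n-p+1; 2; z) holds as formal power series in z. -/

import Mathlib

open Finset PowerSeries


-- hockey stick, ℕ
lemma hockey (s t : ℕ) : ∑ j ∈ range t, j.choose s = t.choose (s+1) := by
  induction t with
  | zero => simp
  | succ t ih => rw [Finset.sum_range_succ, ih, Nat.choose_succ_succ']; ring


lemma geom_pow (k : ℕ) :
    (PowerSeries.mk fun m => if m = 0 then (0 : ℚ) else 1) ^ (k+1) = PowerSeries.mk fun m => if m = 0 then (0:ℚ) else ((m-1).choose k : ℚ) := by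
  induction k with
  | zero =>
    ext m
    simp [PowerSeries.coeff_mk]
  | succ k ih =>
    ext m
    rw [pow_succ, ih]
    rw [PowerSeries.coeff_mul, Finset.Nat.sum_antidiagonal_eq_sum_range_succ_mk]
    simp only [PowerSeries.coeff_mk]
    rcases m with _ | m'
    · simp
    · rw [Finset.sum_range_succ']
      simp only [Nat.succ_sub_succ]
      rw [Finset.sum_range_succ]
      simp only [if_pos rfl, Nat.sub_self, mul_zero, add_zero, if_neg (Nat.succ_ne_zero _),
        zero_mul, Nat.add_sub_cancel]
      have this2 : ∀ j ∈ range m', ((j - 0).choose k : ℚ) * (if m' - j = 0 then (0:ℚ) else 1)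
          = (j.choose k : ℚ) := by
        intro j hj
        simp only [Nat.sub_zero]
        rw [if_neg (by simp at hj; omega)]
        ring
      rw [Finset.sum_congr rfl this2]
      have h3 : (∑ j ∈ range m', (j.choose k : ℚ)) = ((m'.choose (k+1) : ℕ) : ℚ) := by
        exact_mod_cast hockey k m'
      rw [h3]
      simp


lemma vdm (a r i : ℕ) :
    ∑ j ∈ range (a+1), a.choose j * (i+1).choose (r+1+j) = (a+i+1).choose (a+r+1) := by
  have h1 : (a+i+1).choose (a+r+1) = ∑ x ∈ range (a+r+2), a.choose x * (i+1).choose (a+r+1-x) := by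
    rw [show a+i+1 = a + (i+1) by ring, Nat.add_choose_eq,
      Finset.Nat.sum_antidiagonal_eq_sum_range_succ_mk]
  rw [h1, ← Finset.sum_subset (Finset.range_subset_range.2 (by omega : a+1 ≤ a+r+2))
      (fun x _ hx => by
        rw [Nat.choose_eq_zero_of_lt (by simp at hx ⊢; omega), zero_mul])]
  rw [← Finset.sum_range_reflect (fun x => a.choose x * (i+1).choose (a+r+1-x)) (a+1)]
  apply Finset.sum_congr rfl
  intro j hj
  simp only [mem_range] at hj
  have h2 : a + 1 - 1 - j = a - j := by omega
  rw [h2, Nat.choose_symm (by omega : j ≤ a), show a + r + 1 - (a - j) = r + 1 + j by omega]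


lemma chooseR1 (M j : ℕ) : (M.choose j : ℚ) * ((M:ℚ)+1) = ((M+1).choose j : ℚ) * ((M:ℚ)+1-j) := by
  rcases le_or_gt j (M+1) with h | h
  · have hc : ((M.choose j * (M+1) : ℕ) : ℚ) = (((M + 1).choose j * (M + 1 - j) : ℕ) : ℚ) := by
      rw [Nat.choose_mul_succ_eq M j]
    push_cast [Nat.cast_sub h] at hc
    linarith [hc]
  · rw [Nat.choose_eq_zero_of_lt (by omega), Nat.choose_eq_zero_of_lt (by omega)]
    ring

lemma chooseR2 (p r : ℕ) : ((r:ℚ)+1) * (p.choose (r+1) : ℚ) = (p.choose r : ℚ) * ((p:ℚ) - r) := by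
  rcases le_or_gt (r+1) p with h | h
  · have hc : ((p.choose (r+1) * (r+1) : ℕ) : ℚ) = ((p.choose r * (p - r) : ℕ) : ℚ) := by
      rw [Nat.choose_succ_right_eq p r]
    push_cast [Nat.cast_sub (by omega : r ≤ p)] at hc
    linarith [hc]
  · rcases Nat.lt_or_ge r p with h2 | h2
    · have : p = r := by omega
      subst this
      simp [Nat.choose_self, Nat.choose_succ_self]
    · rw [Nat.choose_eq_zero_of_lt (by omega)]
      rcases Nat.eq_or_lt_of_le h2 with rfl | h3
      · simp
      · rw [Nat.choose_eq_zero_of_lt h3]; ring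

lemma chooseUp (p i : ℕ) : ((p:ℚ)+i+1) * ((p+i).choose p : ℚ) = ((i:ℚ)+1) * ((p+i+1).choose p : ℚ) := by
  have h1 : (p+i).choose p = (p+i).choose i := by
    rw [← Nat.choose_symm (by omega : i ≤ p+i), show p+i-i = p by omega]
  have h2 : (p+i+1).choose p = (p+i+1).choose (i+1) := by
    rw [← Nat.choose_symm (by omega : i+1 ≤ p+i+1), show p+i+1-(i+1) = p by omega]
  have hc : (((p+i).succ * (p+i).choose i : ℕ) : ℚ) = (((p+i+1).choose (i+1) * (i+1) : ℕ) : ℚ) := by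
    rw [Nat.succ_eq_add_one, Nat.add_one_mul_choose_eq]
  push_cast at hc
  rw [h1, h2]
  push_cast
  linarith [hc]

lemma suranyi (p q i : ℕ) (hn : 1 ≤ p + q) :
    ∑ r ∈ range (p+q+1), (p.choose r : ℚ) * (q.choose r : ℚ) * ((p+q-r+i).choose (p+q) : ℚ)
      = ((p+i).choose p : ℚ) * ((q+i).choose q : ℚ) := by
  induction i with
  | zero =>
    rw [Finset.sum_eq_single 0 (fun r hr hr0 => by
        have hlt : (p+q-r+0) < p+q := by simp only [Finset.mem_range] at hr; omega
        rw [Nat.choose_eq_zero_of_lt hlt, Nat.cast_zero, mul_zero])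
      (fun h => absurd (Finset.mem_range.2 (by omega)) h)]
    simp
  | succ i ih =>
    set f : ℕ → ℚ := fun r =>
      (r:ℚ)^2 * (p.choose r : ℚ) * (q.choose r : ℚ) * ((p+q-r+i+1).choose (p+q) : ℚ) with hf
    have key : ∀ r ∈ range (p+q+1),
        ((p:ℚ)+i+1) * ((q:ℚ)+i+1) * ((p.choose r : ℚ) * (q.choose r : ℚ) * ((p+q-r+i).choose (p+q) : ℚ))
        = ((i:ℚ)+1)^2 * ((p.choose r : ℚ) * (q.choose r : ℚ) * ((p+q-r+(i+1)).choose (p+q) : ℚ))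
          + (f (r+1) - f r) := by
      intro r hr
      simp only [Finset.mem_range] at hr
      obtain ⟨s, hs⟩ : ∃ s, p + q = r + s := ⟨p+q-r, by omega⟩
      have e1 : p+q-r+i = s+i := by omega
      have e2 : p+q-r+(i+1) = s+i+1 := by omega
      have e3 : p+q-r+i+1 = s+i+1 := by omega
      rcases Nat.lt_or_ge r (p+q) with hlt | hge
      · have e4 : p+q-(r+1)+i+1 = s+i := by omega
        have hR1 := chooseR1 (s+i) (p+q)
        have hR2p := chooseR2 p r
        have hR2q := chooseR2 q r
        have hpq : (p:ℚ) + (q:ℚ) = (r:ℚ) + (s:ℚ) := by exact_mod_cast congrArg (Nat.cast : ℕ → ℚ) hs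
        simp only [hf, e1, e2, e3, e4]
        push_cast at hR1 ⊢
        linear_combination (-(((r:ℚ)+1) * (q.choose (r+1) : ℚ) * ((s+i).choose (p+q) : ℚ))) * hR2p
          + (-(((p:ℚ)-r) * (p.choose r : ℚ) * ((s+i).choose (p+q) : ℚ))) * hR2q
          + ((p.choose r : ℚ) * (q.choose r : ℚ) * ((i:ℚ)+1+r)) * hR1
          + (((i:ℚ)+1+r) * (p.choose r : ℚ) * (q.choose r : ℚ)
              * (((s+i).choose (p+q) : ℚ) - ((s+i+1).choose (p+q) : ℚ))) * hpq
      · -- r = p+q : a*b = 0 and the f(r+1) term has choose p (p+q+1) = 0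
        have hr' : r = p + q := by omega
        have hz : (p.choose r : ℚ) * (q.choose r : ℚ) = 0 := by
          rcases Nat.eq_zero_or_pos q with hq | hq
          · rw [Nat.choose_eq_zero_of_lt (show q < r by omega), Nat.cast_zero, mul_zero]
          · rw [Nat.choose_eq_zero_of_lt (show p < r by omega), Nat.cast_zero, zero_mul]
        have hz1 : (p.choose (r+1) : ℚ) = 0 := by
          rw [Nat.choose_eq_zero_of_lt (by omega : p < r+1), Nat.cast_zero]
        simp only [hf]
        push_cast
        rw [hz1]
        linear_combination (((p:ℚ)+i+1) * ((q:ℚ)+i+1) * ((p+q-r+i).choose (p+q) : ℚ)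
          - ((i:ℚ)+1)^2 * ((p+q-r+(i+1)).choose (p+q) : ℚ)
          + (r:ℚ)^2 * ((p+q-r+i+1).choose (p+q) : ℚ)) * hz
    have tel := Finset.sum_range_sub f (p+q+1)
    have hsum : ((p:ℚ)+i+1) * ((q:ℚ)+i+1) *
        (∑ r ∈ range (p+q+1), (p.choose r : ℚ) * (q.choose r : ℚ) * ((p+q-r+i).choose (p+q) : ℚ))
        = ((i:ℚ)+1)^2 * (∑ r ∈ range (p+q+1),
            (p.choose r : ℚ) * (q.choose r : ℚ) * ((p+q-r+(i+1)).choose (p+q) : ℚ)) := by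
      rw [Finset.mul_sum, Finset.sum_congr rfl key, Finset.sum_add_distrib, tel, Finset.mul_sum]
      have hf0 : f 0 = 0 := by simp [hf]
      have hftop : f (p+q+1) = 0 := by
        simp only [hf]
        rw [Nat.choose_eq_zero_of_lt (by omega : p < p+q+1), Nat.cast_zero]
        ring
      rw [hf0, hftop]
      ring
    rw [ih] at hsum
    have hne : (((i:ℚ)+1)^2) ≠ 0 := by positivity
    apply mul_left_cancel₀ hne
    rw [← hsum]
    simp only [← Nat.add_assoc]
    linear_combination (((q:ℚ)+i+1) * ((q+i).choose q : ℚ)) * chooseUp p i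
      + (((i:ℚ)+1) * ((p+i+1).choose p : ℚ)) * chooseUp q i


lemma key (p q n i : ℕ) (hn : 1 ≤ n) (hpq : n = p + q) :
    ∑ k ∈ Icc 1 n, (∑ r ∈ range k,
        (p.choose r : ℚ) * (q.choose r : ℚ) * ((n-r-1).choose (k-r-1) : ℚ)) * ((i+1).choose k : ℚ)
      = ((p+i).choose p : ℚ) * ((q+i).choose q : ℚ) := by
  -- Step A: extend to k ∈ Ico 0 (n+1) with inner sum over Ico 0 k, distributing the product
  have h1 : ∑ k ∈ Ico 0 (n+1), ∑ r ∈ Ico 0 k,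
        (p.choose r : ℚ) * (q.choose r : ℚ) * ((n-r-1).choose (k-r-1) : ℚ) * ((i+1).choose k : ℚ)
      = ∑ k ∈ Icc 1 n, (∑ r ∈ range k,
        (p.choose r : ℚ) * (q.choose r : ℚ) * ((n-r-1).choose (k-r-1) : ℚ)) * ((i+1).choose k : ℚ) := by
    rw [Finset.sum_eq_sum_Ico_succ_bot (by omega : 0 < n+1)]
    rw [show Ico (0+1) (n+1) = Icc 1 n by rw [show 0+1 = 1 from rfl, Finset.Ico_add_one_right_eq_Icc]]
    simp only [Ico_self, Finset.sum_empty, zero_add, Nat.Ico_zero_eq_range]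
    exact Finset.sum_congr rfl (fun k _ => (Finset.sum_mul _ _ _).symm)
  rw [← h1, ← Finset.sum_Ico_Ico_comm' 0 (n+1)]
  -- Step C: inner sums
  have h2 : ∀ r ∈ Ico 0 (n+1), ∑ k ∈ Ico (r+1) (n+1),
        (p.choose r : ℚ) * (q.choose r : ℚ) * ((n-r-1).choose (k-r-1) : ℚ) * ((i+1).choose k : ℚ)
      = (p.choose r : ℚ) * (q.choose r : ℚ) * ((n-r+i).choose n : ℚ) := by
    intro r hr
    simp only [Finset.mem_Ico] at hr
    rcases Nat.lt_or_ge r n with hlt | hge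
    · obtain ⟨t, ht⟩ : ∃ t, n = r + t + 1 := ⟨n - r - 1, by omega⟩
      rw [Finset.sum_Ico_eq_sum_range]
      rw [show n + 1 - (r+1) = t+1 by omega]
      have e : ∀ j ∈ range (t+1),
          (p.choose r : ℚ) * (q.choose r : ℚ) * ((n-r-1).choose (r+1+j-r-1) : ℚ)
            * ((i+1).choose (r+1+j) : ℚ)
          = (p.choose r : ℚ) * (q.choose r : ℚ)
            * ((t.choose j : ℕ) * ((i+1).choose (r+1+j) : ℕ) : ℚ) := by
        intro j _
        rw [show r+1+j-r-1 = j by omega, show n-r-1 = t by omega]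
        push_cast; ring
      have hv : ∑ j ∈ range (t+1), (t.choose j : ℚ) * ((i+1).choose (r+1+j) : ℚ)
          = ((t+i+1).choose (t+r+1) : ℚ) := by exact_mod_cast vdm t r i
      rw [Finset.sum_congr rfl e, ← Finset.mul_sum]
      rw [hv, show t+i+1 = n-r+i by omega, show t+r+1 = n by omega]
    · -- r = n : both sides are zero
      have hr' : r = n := by omega
      have hz : (p.choose r : ℚ) * (q.choose r : ℚ) = 0 := by
        rcases Nat.eq_zero_or_pos q with hq | hq
        · rw [Nat.choose_eq_zero_of_lt (show q < r by omega), Nat.cast_zero, mul_zero]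
        · rw [Nat.choose_eq_zero_of_lt (show p < r by omega), Nat.cast_zero, zero_mul]
      rw [hr', Ico_self, Finset.sum_empty, hr'] at *
      rw [hz, zero_mul]
  rw [Finset.sum_congr rfl h2]
  have h3 : ∀ r ∈ Ico 0 (n+1), (p.choose r : ℚ) * (q.choose r : ℚ) * ((n-r+i).choose n : ℚ)
      = (p.choose r : ℚ) * (q.choose r : ℚ) * ((p+q-r+i).choose (p+q) : ℚ) := by
    intro r _
    rw [show n - r = p + q - r by omega, hpq]
  rw [Finset.sum_congr rfl h3, show Ico 0 (n+1) = range (p+q+1) by rw [hpq, Nat.Ico_zero_eq_range]]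
  exact suranyi p q i (by omega)


lemma chooseUp' (p i : ℕ) : ((p:ℚ)+i+1) * ((p+i).choose i : ℚ) = ((i:ℚ)+1) * ((p+i+1).choose (i+1) : ℚ) := by
  have hc : (((p+i).succ * (p+i).choose i : ℕ) : ℚ) = (((p+i+1).choose (i+1) * (i+1) : ℕ) : ℚ) := by
    rw [Nat.succ_eq_add_one, Nat.add_one_mul_choose_eq]
  push_cast at hc
  linarith [hc]

lemma poch (p i : ℕ) :
    (ascPochhammer ℚ i).eval ((p:ℚ)+1) = ((p+i).choose i : ℚ) * (i.factorial : ℚ) := by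
  induction i with
  | zero => simp
  | succ i ih =>
    rw [ascPochhammer_succ_eval, ih]
    have := chooseUp' p i
    rw [Nat.factorial_succ, show p+(i+1) = p+i+1 by omega]
    push_cast
    nlinarith [this]

lemma poch2 (i : ℕ) : (ascPochhammer ℚ i).eval 2 = ((i+1).factorial : ℚ) := by
  have := poch 1 i
  norm_num at this
  rw [this, show 1+i = i+1 by omega,
    Nat.choose_succ_self_right, Nat.factorial_succ]
  push_cast; ring

lemma chooseSymmPI (p i : ℕ) : (p+i).choose p = (p+i).choose i := by
  rw [← Nat.choose_symm (by omega : i ≤ p+i), show p+i-i = p by omega]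

/-- Generalized binomial coefficient `C(n,p;k) = (n/k) · Σ_{r≥0}
binom(p,r)·binom(n-p,r)·binom(n-r-1,k-r-1)`.  The sum is over `0 ≤ r ≤ k-1`,
which covers every nonzero term since `binom(n-r-1,k-r-1) = 0` for `r ≥ k`
(negative lower index in the usual convention). -/
def Cgen (n p k : ℕ) : ℚ :=
  (n : ℚ) / (k : ℚ) *
    ∑ r ∈ Finset.range k,
      ((p.choose r : ℚ) * ((n - p).choose r : ℚ) * ((n - r - 1).choose (k - r - 1) : ℚ))


open PowerSeries in
theorem Cgen_hypergeometric_gf (n p : ℕ) (hn : 1 ≤ n) (hp : p ≤ n) :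
    ∑ k ∈ Finset.Icc 1 n,
        (PowerSeries.C : ℚ →+* PowerSeries ℚ) (Cgen n p k) * (PowerSeries.mk fun m => if m = 0 then (0 : ℚ) else 1) ^ k =
      (PowerSeries.C : ℚ →+* PowerSeries ℚ) (n : ℚ) * PowerSeries.X *
        PowerSeries.mk (fun i =>
          (ascPochhammer ℚ i).eval ((p : ℚ) + 1) * (ascPochhammer ℚ i).eval ((n : ℚ) - (p : ℚ) + 1) /
            ((ascPochhammer ℚ i).eval 2 * (i.factorial : ℚ))) := by
  have hq : (n:ℚ) - (p:ℚ) = ((n-p : ℕ) : ℚ) := by rw [Nat.cast_sub hp]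
  apply PowerSeries.ext
  intro m
  rw [map_sum]
  have hL : ∀ k ∈ Icc 1 n, (PowerSeries.coeff m)
        (PowerSeries.C (Cgen n p k) * (PowerSeries.mk fun m => if m = 0 then (0:ℚ) else 1)^k)
      = Cgen n p k * (if m = 0 then 0 else ((m-1).choose (k-1) : ℚ)) := by
    intro k hk
    simp only [mem_Icc] at hk
    obtain ⟨k', rfl⟩ : ∃ k', k = k'+1 := ⟨k-1, by omega⟩
    rw [geom_pow k', PowerSeries.coeff_C_mul, PowerSeries.coeff_mk, Nat.add_sub_cancel]
  rw [Finset.sum_congr rfl hL]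
  rcases m with _ | i
  · simp [PowerSeries.coeff_zero_eq_constantCoeff, map_mul]
  · rw [mul_assoc, PowerSeries.coeff_C_mul, PowerSeries.coeff_succ_X_mul, PowerSeries.coeff_mk]
    rw [hq, poch p i, poch (n-p) i, poch2 i]
    simp only [Nat.succ_ne_zero, if_false, Nat.add_sub_cancel]
    have hstep : ∀ k ∈ Icc 1 n, Cgen n p k * ((i).choose (k-1) : ℚ)
        = ((n:ℚ)/((i:ℚ)+1)) * ((∑ r ∈ range k,
            (p.choose r : ℚ) * ((n-p).choose r : ℚ) * ((n-r-1).choose (k-r-1) : ℚ))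
          * ((i+1).choose k : ℚ)) := by
      intro k hk
      simp only [mem_Icc] at hk
      have hkc : ((i:ℚ)+1) * ((i).choose (k-1) : ℚ) = ((i+1).choose k : ℚ) * (k:ℚ) := by
        have h0 := Nat.add_one_mul_choose_eq i (k-1)
        rw [show (k-1)+1 = k by omega] at h0
        exact_mod_cast h0
      have hk0 : (k:ℚ) ≠ 0 := Nat.cast_ne_zero.2 (by omega)
      have hi0 : ((i:ℚ)+1) ≠ 0 := by positivity
      unfold Cgen
      field_simp
      linear_combination ((∑ r ∈ range k,
            (p.choose r : ℚ) * ((n-p).choose r : ℚ) * ((n-r-1).choose (k-r-1) : ℚ))) * hkc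
    rw [Finset.sum_congr rfl hstep, ← Finset.mul_sum, key p (n-p) n i hn (by omega)]
    rw [chooseSymmPI p i, chooseSymmPI (n-p) i, Nat.factorial_succ]
    have hi0 : ((i:ℚ)+1) ≠ 0 := by positivity
    have hf0 : ((i.factorial : ℚ)) ≠ 0 := Nat.cast_ne_zero.2 (Nat.factorial_ne_zero i)
    field_simp
    push_cast
    ring
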